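/- In the upper half space model of hyperbolic n-space, the hyperbolic distance from a point x = (x_1, ..., x_n) with x_n > 0 to the vertical geodesic axis {(0,...,0,t) : t > 0} equals arcosh(‖x‖ / x_n), where ‖x‖ is the Euclidean norm of x. -/

import Mathlib

/-- Inverse hyperbolic cosine. -/
noncomputable def arcosh (x : ℝ) : ℝ := Real.log (x + Real.sqrt (x ^ 2 - 1))

/-- The hyperbolic distance in the upper half space model of ℍ^{n+1}
(points of ℝ^{n+1} with positive last coordinate):
d(x,y) = arcosh(1 + (Σ (xᵢ − yᵢ)²)/(2 xₙ yₙ)). -/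
noncomputable def uhsDist (n : ℕ) (x y : EuclideanSpace ℝ (Fin (n + 1))) : ℝ :=
  arcosh (1 + (∑ i, (x i - y i) ^ 2) / (2 * x (Fin.last n) * y (Fin.last n)))

/-- The point (0, ..., 0, t) on the vertical axis. -/
noncomputable def vertAxis (n : ℕ) (t : ℝ) : EuclideanSpace ℝ (Fin (n + 1)) :=
  WithLp.toLp 2 (fun i => if i = Fin.last n then t else 0)

/-!
On the axis, `d(x, (0,…,0,t)) = arcosh ((‖x‖² + t²) / (2 xₙ t))`. By AM–GM,
`‖x‖² + t² ≥ 2 ‖x‖ t` with equality at `t = ‖x‖`, and `arcosh` is monotone, so the infimum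
is attained at `t = ‖x‖` and equals `arcosh (‖x‖ / xₙ)`.
-/

lemma arcosh_le_arcosh {u v : ℝ} (hu : 0 < u) (huv : u ≤ v) : arcosh u ≤ arcosh v := by
  unfold arcosh
  gcongr

lemma uhsDist_eq_arcosh_norm_sub (n : ℕ) (x y : EuclideanSpace ℝ (Fin (n + 1))) :
    uhsDist n x y = arcosh (1 + ‖x - y‖ ^ 2 / (2 * x (Fin.last n) * y (Fin.last n))) := by
  simp [uhsDist, EuclideanSpace.real_norm_sq_eq]

lemma vertAxis_eq_single (n : ℕ) (t : ℝ) :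
    vertAxis n t = EuclideanSpace.single (Fin.last n) t := by
  ext i
  simp [vertAxis]

lemma norm_sub_vertAxis_sq (n : ℕ) (x : EuclideanSpace ℝ (Fin (n + 1))) (t : ℝ) :
    ‖x - vertAxis n t‖ ^ 2 = ‖x‖ ^ 2 - 2 * t * x (Fin.last n) + t ^ 2 := by
  rw [vertAxis_eq_single, norm_sub_sq_real, EuclideanSpace.inner_single_right]
  simp [mul_assoc]

lemma uhsDist_vertAxis (n : ℕ) (x : EuclideanSpace ℝ (Fin (n + 1))) {t : ℝ}
    (hx : x (Fin.last n) ≠ 0) (ht : t ≠ 0) :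
    uhsDist n x (vertAxis n t) = arcosh ((‖x‖ ^ 2 + t ^ 2) / (2 * x (Fin.last n) * t)) := by
  rw [uhsDist_eq_arcosh_norm_sub, norm_sub_vertAxis_sq]
  congr 1
  simp only [vertAxis, WithLp.ofLp_toLp, if_pos]
  field_simp
  ring

lemma div_le_sq_add_sq_div {a b t : ℝ} (hb : 0 < b) (ht : 0 < t) :
    a / b ≤ (a ^ 2 + t ^ 2) / (2 * b * t) := by
  rw [div_le_div_iff₀ hb (by positivity)]
  nlinarith [sq_nonneg (a - t)]

/-- In the upper half space model, the distance from a point x with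
x_n > 0 to the vertical axis {(0,...,0,t) : t > 0} (the infimum of distances to
its points) equals arcosh(‖x‖ / x_n). -/
theorem dist_to_vertical_axis (n : ℕ) (x : EuclideanSpace ℝ (Fin (n + 1)))
    (hx : 0 < x (Fin.last n)) :
    sInf ((fun t => uhsDist n x (vertAxis n t)) '' Set.Ioi (0 : ℝ)) =
      arcosh (‖x‖ / x (Fin.last n)) := by
  have hax : x (Fin.last n) ≤ ‖x‖ := (le_abs_self _).trans (PiLp.norm_apply_le x _)
  have hx0 : 0 < ‖x‖ := hx.trans_le hax
  refine IsLeast.csInf_eq ⟨⟨‖x‖, hx0, ?_⟩, ?_⟩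
  · dsimp only
    rw [uhsDist_vertAxis n x hx.ne' hx0.ne']
    congr 1
    field_simp
    ring
  · rintro _ ⟨t, ht, rfl⟩
    dsimp only
    rw [uhsDist_vertAxis n x hx.ne' ht.ne']
    exact arcosh_le_arcosh (by positivity) (div_le_sq_add_sq_div hx ht)
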